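/- Let η be an L-subgroup of μ that is both pronormal and subnormal in μ. Then η is a normal L-subgroup of μ. -/

import Mathlib

open scoped Classical

section Defs

variable {G : Type*} [Group G] {L : Type*} [CompletelyDistribLattice L]

/-- `μ` is an `L`-subgroup of the group `G`. -/
def IsLSubgroup (μ : G → L) : Prop :=
  (∀ x y : G, μ x ⊓ μ y ≤ μ (x * y)) ∧ (∀ x : G, μ x⁻¹ = μ x)

/-- The conjugate `η^{a_z}` of `η` by the `L`-point `a_z`. -/
def LConj (η : G → L) (a : L) (z : G) : G → L :=
  fun x => a ⊓ η (z * x * z⁻¹)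

/-- The `L`-subgroup generated by the `L`-subset `η`. -/
def LGen (η : G → L) : G → L :=
  fun x => ⨅ θ ∈ {θ : G → L | IsLSubgroup θ ∧ η ≤ θ}, θ x

/-- `η` is a pronormal `L`-subgroup of `μ`. -/
def IsLPronormal (μ η : G → L) : Prop :=
  IsLSubgroup η ∧ η ≤ μ ∧
    ∀ (a : L) (x : G), a ≤ μ x →
      ∃ (b : L) (y : G), b ≤ LGen (η ⊔ LConj η a x) y ∧ LConj η b y = LConj η a x

/-- `η` is a normal `L`-subgroup of `μ`. -/
def IsLNormal (μ η : G → L) : Prop :=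
  IsLSubgroup η ∧ η ≤ μ ∧ ∀ x y : G, η x ⊓ μ y ≤ η (y * x * y⁻¹)

/-- Set product of two `L`-subsets. -/
def LSetProd (η ν : G → L) : G → L :=
  fun x => ⨆ y : G, ⨆ z : G, ⨆ _ : y * z = x, η y ⊓ ν z

/-- The normalizer `N(η)` of `η` in `μ`. -/
def LNormalizer (μ η : G → L) : G → L :=
  fun z => sSup {a : L | a ≤ μ z ∧ LConj η a z ≤ η}

/-- The conjugate `μημ⁻¹` of `η` in `μ`. -/
def LConjAll (μ η : G → L) : G → L :=
  fun x => ⨆ z : G, ⨆ y : G, ⨆ _ : x = z * y * z⁻¹, η y ⊓ μ z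

/-- The normal closure `η^μ` of `η` in `μ`. -/
def LNormalClosure (μ η : G → L) : G → L := LGen (LConjAll μ η)

/-- The normal closure series `η₀ = μ`, `ηᵢ₊₁ = η^{ηᵢ}`. -/
def LNcSeries (μ η : G → L) : ℕ → (G → L)
  | 0 => μ
  | n + 1 => LNormalClosure (LNcSeries μ η n) η

/-- `η` is a subnormal `L`-subgroup of `μ`. -/
def IsLSubnormal (μ η : G → L) : Prop := ∃ m : ℕ, LNcSeries μ η m = η

/-- The commutator `(η, θ)` of two `L`-subsets. -/
noncomputable def LCommFun (η θ : G → L) : G → L :=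
  fun x =>
    if ∃ y z : G, x = y * z * y⁻¹ * z⁻¹ then
      ⨆ y : G, ⨆ z : G, ⨆ _ : x = y * z * y⁻¹ * z⁻¹, η y ⊓ θ z
    else (⨅ g : G, η g) ⊓ (⨅ g : G, θ g)

/-- The descending central chain `Z₀(μ) = μ`, `Zᵢ₊₁(μ) = [Zᵢ(μ), μ]`. -/
noncomputable def LDcc (μ : G → L) : ℕ → (G → L)
  | 0 => μ
  | n + 1 => LGen (LCommFun (LDcc μ n) μ)

/-- The trivial `L`-subgroup with the same tip and tail as `μ`. -/
noncomputable def LTrivial (μ : G → L) : G → L :=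
  fun x => if x = 1 then μ 1 else ⨅ g : G, μ g

/-- `μ` is a nilpotent `L`-group. -/
def IsLNilpotent (μ : G → L) : Prop := ∃ n : ℕ, LDcc μ n = LTrivial μ

/-- Sup-property of an `L`-subset. -/
def SupProp (μ : G → L) : Prop :=
  ∀ A : Set G, A.Nonempty → ∃ a ∈ A, μ a = ⨆ x ∈ A, μ x

end Defs

/-- Image of an `L`-subset under a map. -/
def LImage {G H L : Type*} [CompleteLattice L] (f : G → H) (μ : G → L) : H → L :=
  fun y => ⨆ x : G, ⨆ _ : f x = y, μ x

/-! If `η` is normal in the normal closure `η^ν`, pronormality lets every conjugation by an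
`L`-point of `ν` be replaced by one by an `L`-point of `⟨η, η^{a_x}⟩ ≤ η^ν`, which normalizes `η`;
hence `η` is normal in `ν`. Descending the normal closure series from `η_m = η` to `η₀ = μ`
gives normality in `μ`. -/

section NormalClosure

variable {G : Type*} [Group G] {L : Type*} [CompletelyDistribLattice L]

namespace IsLSubgroup

variable {μ : G → L}

lemma le_one (hμ : IsLSubgroup μ) (g : G) : μ g ≤ μ 1 := by
  simpa [hμ.2 g] using hμ.1 g g⁻¹

lemma inf_le_conj (hμ : IsLSubgroup μ) (g x : G) : μ g ⊓ μ x ≤ μ (x * g * x⁻¹) :=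
  calc μ g ⊓ μ x ≤ μ (x * g) ⊓ μ x⁻¹ :=
        le_inf ((le_inf inf_le_right inf_le_left).trans (hμ.1 x g)) (hμ.2 x ▸ inf_le_right)
    _ ≤ μ (x * g * x⁻¹) := hμ.1 _ _

lemma isLNormal_self (hμ : IsLSubgroup μ) : IsLNormal μ μ :=
  ⟨hμ, le_rfl, fun g x => hμ.inf_le_conj g x⟩

end IsLSubgroup

lemma le_lGen (η : G → L) : η ≤ LGen η :=
  fun _ => le_iInf₂ fun _ hθ => hθ.2 _

lemma lGen_le {η θ : G → L} (hθ : IsLSubgroup θ) (h : η ≤ θ) : LGen η ≤ θ :=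
  fun _ => iInf₂_le θ ⟨hθ, h⟩

lemma isLSubgroup_lGen (η : G → L) : IsLSubgroup (LGen η) := by
  have inv_le : ∀ z : G, LGen η z⁻¹ ≤ LGen η z := fun z =>
    le_iInf₂ fun θ hθ => hθ.1.2 z ▸ iInf₂_le θ hθ
  refine ⟨fun x y => le_iInf₂ fun θ hθ => ?_, fun x => (inv_le x).antisymm ?_⟩
  · exact (inf_le_inf (iInf₂_le θ hθ) (iInf₂_le θ hθ)).trans (hθ.1.1 x y)
  · simpa using inv_le x⁻¹

section

variable {ν η : G → L}

lemma le_lConjAll (hν : IsLSubgroup ν) (hην : η ≤ ν) : η ≤ LConjAll ν η := fun g =>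
  le_iSup_of_le 1 <| le_iSup_of_le g <| le_iSup_of_le (by group) <|
    le_inf le_rfl ((hην g).trans (hν.le_one g))

lemma lConjAll_le (hν : IsLSubgroup ν) (hην : η ≤ ν) : LConjAll ν η ≤ ν := fun _ =>
  iSup_le fun z => iSup_le fun y => iSup_le fun hw =>
    hw ▸ (inf_le_inf_right _ (hην y)).trans (hν.inf_le_conj y z)

lemma lConj_le_lConjAll {a : L} {x : G} (ha : a ≤ ν x⁻¹) : LConj η a x ≤ LConjAll ν η :=
  fun w => le_iSup_of_le x⁻¹ <| le_iSup_of_le (x * w * x⁻¹) <| le_iSup_of_le (by group) <|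
    le_inf inf_le_right (inf_le_left.trans ha)

lemma isLSubgroup_lNormalClosure : IsLSubgroup (LNormalClosure ν η) :=
  isLSubgroup_lGen _

lemma le_lNormalClosure (hν : IsLSubgroup ν) (hην : η ≤ ν) : η ≤ LNormalClosure ν η :=
  (le_lConjAll hν hην).trans (le_lGen _)

lemma lNormalClosure_le (hν : IsLSubgroup ν) (hην : η ≤ ν) : LNormalClosure ν η ≤ ν :=
  lGen_le hν (lConjAll_le hν hην)

end

variable {μ η : G → L}

lemma isLSubgroup_lNcSeries (hμ : IsLSubgroup μ) : ∀ i, IsLSubgroup (LNcSeries μ η i)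
  | 0 => hμ
  | _ + 1 => isLSubgroup_lNormalClosure

lemma le_lNcSeries (hμ : IsLSubgroup μ) (hημ : η ≤ μ) : ∀ i, η ≤ LNcSeries μ η i
  | 0 => hημ
  | i + 1 => le_lNormalClosure (isLSubgroup_lNcSeries hμ i) (le_lNcSeries hμ hημ i)

lemma lNcSeries_le (hμ : IsLSubgroup μ) (hημ : η ≤ μ) : ∀ i, LNcSeries μ η i ≤ μ
  | 0 => le_rfl
  | i + 1 => (lNormalClosure_le (isLSubgroup_lNcSeries hμ i) (le_lNcSeries hμ hημ i)).trans
      (lNcSeries_le hμ hημ i)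

lemma IsLPronormal.isLNormal_of_isLNormal_lNormalClosure {ν : G → L} (hpro : IsLPronormal μ η)
    (hν : IsLSubgroup ν) (hην : η ≤ ν) (hνμ : ν ≤ μ)
    (hnorm : IsLNormal (LNormalClosure ν η) η) : IsLNormal ν η := by
  obtain ⟨hη, -, hconj⟩ := hpro
  refine ⟨hη, hην, fun g x => ?_⟩
  set a := η g ⊓ ν x
  obtain ⟨b, z, hb, hbz⟩ := hconj a x (inf_le_right.trans (hνμ x))
  have hb_closure : b ≤ LNormalClosure ν η z := by
    refine hb.trans (lGen_le isLSubgroup_lNormalClosure (sup_le (le_lNormalClosure hν hην) ?_) z)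
    exact (lConj_le_lConjAll (hν.2 x ▸ inf_le_right)).trans (le_lGen _)
  -- `η^{b_z}` and `η^{a_x}` agree at `1`, where `η` is above `a`
  have hab : a ≤ b := by
    have h1 : b ⊓ η 1 = a ⊓ η 1 := by simpa [LConj] using congrFun hbz 1
    rw [inf_eq_left.mpr (inf_le_left.trans (hη.le_one g))] at h1
    exact h1.ge.trans inf_le_left
  calc a ≤ b ⊓ (η g ⊓ LNormalClosure ν η z) :=
        le_inf hab (le_inf inf_le_left (hab.trans hb_closure))
    _ ≤ b ⊓ η (z * g * z⁻¹) := inf_le_inf_left _ (hnorm.2.2 g z)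
    _ = a ⊓ η (x * g * x⁻¹) := congrFun hbz g
    _ ≤ η (x * g * x⁻¹) := inf_le_right

end NormalClosure

theorem stmt17 {G : Type*} [Group G] {L : Type*} [CompletelyDistribLattice L]
    (μ η : G → L) (hμ : IsLSubgroup μ)
    (hpro : IsLPronormal μ η) (hsub : IsLSubnormal μ η) :
    IsLNormal μ η := by
  obtain ⟨m, hm⟩ := hsub
  have hημ := hpro.2.1
  have normal_at_m : IsLNormal (LNcSeries μ η m) η := by
    rw [hm]; exact hpro.1.isLNormal_self
  exact Nat.decreasingInduction (motive := fun i _ => IsLNormal (LNcSeries μ η i) η)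
    (fun i _ h => hpro.isLNormal_of_isLNormal_lNormalClosure (isLSubgroup_lNcSeries hμ i)
      (le_lNcSeries hμ hημ i) (lNcSeries_le hμ hημ i) h)
    normal_at_m (Nat.zero_le m)
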